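/- arXiv:1107.2813 — 4 statements merged into one kernel-verified Lean document; each statement's English description precedes it below -/
import Mathlib

section
/- The stabilizer of the cuspidal cubic {[Z1:Z2:Z3] ∈ ℂP² : Z3·(Z2)² = (Z1)³} under the action of SL(3,ℂ) by projective transformations consists exactly of the matrices diag(a, a⁴, a⁻⁵) for a ∈ ℂ*; in particular it is one-dimensional. -/
/-!
Write `f` for the cubic form, `λ` for the scalar and `a b c' / d e f' / g h i` for the rows
of `N`. The polar form of `f` is transported by `N` (`polar (N p) (N q) = λ * polar p q`) and
vanishes identically at the cusp `e₂`; as `N` is invertible, it then vanishes identically at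
`N e₂`, so `N e₂` is a singular point of `f`, i.e. `c' = f' = 0`. Evaluating the polar form on
pairs of columns gives `i d² = 0`, hence `d = 0`, and then `a²b = 0`, `g e² = 3ab²`,
`h e² = b³`, `f (N e₀) = -λ` and `i e² = λ`; together with `det N = i (ae - bd) = 1` these
leave exactly `diag(a, a⁴, a⁻⁵)`.
-/

/-- The cubic form cutting out the cuspidal cubic `Z3·Z2² − Z1³` (indices `0,1,2`). -/
def cuspidalCubicForm (Z : Fin 3 → ℂ) : ℂ := Z 2 * (Z 1) ^ 2 - (Z 0) ^ 3

open Matrix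

/-- The derivative of `cuspidalCubicForm` at `p` in the direction `q`. -/
def cuspidalCubicPolar (p q : Fin 3 → ℂ) : ℂ :=
  q 2 * p 1 ^ 2 + 2 * p 2 * p 1 * q 1 - 3 * p 0 ^ 2 * q 0

/-- `t ↦ f (p + t q)` is a cubic in `t` whose linear coefficient is the polar form; it is read off
from the values at `t = 0, ±1, 2`. -/
lemma cuspidalCubicPolar_eq (p q : Fin 3 → ℂ) :
    6 * cuspidalCubicPolar p q = 6 * cuspidalCubicForm (p + q) - 2 * cuspidalCubicForm (p - q)
      - cuspidalCubicForm (p + (2 : ℂ) • q) - 3 * cuspidalCubicForm p := by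
  simp only [cuspidalCubicPolar, cuspidalCubicForm, Pi.add_apply, Pi.sub_apply, Pi.smul_apply,
    smul_eq_mul]
  ring

lemma cuspidalCubicPolar_mulVec {A : Matrix (Fin 3) (Fin 3) ℂ} {c : ℂ}
    (h : ∀ Z, cuspidalCubicForm (A *ᵥ Z) = c * cuspidalCubicForm Z) (p q : Fin 3 → ℂ) :
    cuspidalCubicPolar (A *ᵥ p) (A *ᵥ q) = c * cuspidalCubicPolar p q := by
  have hA := cuspidalCubicPolar_eq (A *ᵥ p) (A *ᵥ q)
  rw [← mulVec_add, ← mulVec_sub, ← mulVec_smul, ← mulVec_add, h, h, h, h] at hA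
  linear_combination hA / 6 - c * cuspidalCubicPolar_eq p q / 6

lemma cuspidalCubicPolar_single_two (q : Fin 3 → ℂ) :
    cuspidalCubicPolar (Pi.single 2 1) q = 0 := by
  simp [cuspidalCubicPolar]

lemma eq_zero_of_cuspidalCubicPolar_eq_zero {p : Fin 3 → ℂ}
    (h : ∀ q, cuspidalCubicPolar p q = 0) : p 0 = 0 ∧ p 1 = 0 :=
  ⟨by simpa [cuspidalCubicPolar] using h (Pi.single 0 1),
    by simpa [cuspidalCubicPolar] using h (Pi.single 2 1)⟩

lemma cuspidalCubicForm_diagonal {a : ℂ} (ha : a ≠ 0) (Z : Fin 3 → ℂ) :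
    cuspidalCubicForm (diagonal ![a, a ^ 4, (a ^ 5)⁻¹] *ᵥ Z) =
      a ^ 3 * cuspidalCubicForm Z := by
  simp only [cuspidalCubicForm, mulVec_diagonal, Fin.isValue, Matrix.cons_val]
  field_simp

section Stabilizer

variable {A : Matrix (Fin 3) (Fin 3) ℂ} {c : ℂ}
  (h : ∀ Z, cuspidalCubicForm (A *ᵥ Z) = c * cuspidalCubicForm Z)
include h

lemma col_two_of_stabilizes (hA : IsUnit A.det) : A 0 2 = 0 ∧ A 1 2 = 0 := by
  have hsing (w : Fin 3 → ℂ) : cuspidalCubicPolar (A *ᵥ Pi.single 2 1) w = 0 := by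
    have hw : A *ᵥ (A⁻¹ *ᵥ w) = w := by simp [mulVec_mulVec, mul_nonsing_inv A hA]
    rw [← hw, cuspidalCubicPolar_mulVec h, cuspidalCubicPolar_single_two, mul_zero]
  simpa [mulVec_single_one] using eq_zero_of_cuspidalCubicPolar_eq_zero hsing

lemma eq_diagonal_of_stabilizes (hA : A.det = 1) :
    ∃ a : ℂ, a ≠ 0 ∧ A = diagonal ![a, a ^ 4, (a ^ 5)⁻¹] := by
  obtain ⟨h02, h12⟩ := col_two_of_stabilizes h (hA ▸ isUnit_one)
  have hdet := hA
  rw [det_fin_three, h02, h12] at hdet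
  have hpolar (i j : Fin 3) := cuspidalCubicPolar_mulVec h (Pi.single i 1) (Pi.single j 1)
  have p02 : A 2 2 * A 1 0 ^ 2 = 0 := by simpa [cuspidalCubicPolar, h02, h12] using hpolar 0 2
  have p01 : A 2 1 * A 1 0 ^ 2 + 2 * A 2 0 * A 1 0 * A 1 1 - 3 * A 0 0 ^ 2 * A 0 1 = 0 := by
    simpa [cuspidalCubicPolar] using hpolar 0 1
  have p10 : A 2 0 * A 1 1 ^ 2 + 2 * A 2 1 * A 1 1 * A 1 0 - 3 * A 0 1 ^ 2 * A 0 0 = 0 := by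
    simpa [cuspidalCubicPolar] using hpolar 1 0
  have p12 : A 2 2 * A 1 1 ^ 2 = c := by simpa [cuspidalCubicPolar, h02, h12] using hpolar 1 2
  have f0 : A 2 0 * A 1 0 ^ 2 - A 0 0 ^ 3 = -c := by
    simpa [cuspidalCubicForm] using h (Pi.single 0 1)
  have f1 : A 2 1 * A 1 1 ^ 2 - A 0 1 ^ 3 = 0 := by
    simpa [cuspidalCubicForm] using h (Pi.single 1 1)
  have h22 : A 2 2 ≠ 0 := by rintro h22; simp [h22] at hdet
  have h10 : A 1 0 = 0 := by simpa [h22] using p02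
  have hdiag : A 0 0 * A 1 1 * A 2 2 = 1 := by linear_combination hdet + A 0 1 * A 2 2 * h10
  have h00 : A 0 0 ≠ 0 := by rintro h00; simp [h00] at hdiag
  have h11 : A 1 1 ≠ 0 := by rintro h11; simp [h11] at hdiag
  have h01 : A 0 1 = 0 := by simpa [h10, h00] using p01
  have h20 : A 2 0 = 0 := by simpa [h10, h01, h11] using p10
  have h21 : A 2 1 = 0 := by simpa [h01, h11] using f1
  have hc : A 0 0 ^ 3 = c := by simpa [h10] using f0
  have hA11 : A 1 1 = A 0 0 ^ 4 := by linear_combination A 0 0 * p12 - A 1 1 * hdiag - A 0 0 * hc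
  have hA22 : A 2 2 = (A 0 0 ^ 5)⁻¹ := eq_inv_of_mul_eq_one_left <| by
    linear_combination hdiag - A 0 0 * A 2 2 * hA11
  refine ⟨A 0 0, h00, ?_⟩
  ext i j
  fin_cases i <;> fin_cases j <;> simp [*]

end Stabilizer

/-- The stabiliser of the cuspidal cubic under the `SL(3,ℂ)` action on `ℂP²` consists
exactly of the matrices `diag(a, a⁴, a⁻⁵)`, `a ∈ ℂ*`. -/
theorem stabilizer_cuspidal_cubic (N : Matrix.SpecialLinearGroup (Fin 3) ℂ) :
    (∃ lam : ℂ, lam ≠ 0 ∧ ∀ Z : Fin 3 → ℂ,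
      cuspidalCubicForm ((N : Matrix (Fin 3) (Fin 3) ℂ).mulVec Z) = lam * cuspidalCubicForm Z)
    ↔ ∃ a : ℂ, a ≠ 0 ∧
        (N : Matrix (Fin 3) (Fin 3) ℂ) = Matrix.diagonal ![a, a ^ 4, (a ^ 5)⁻¹] := by
  constructor
  · rintro ⟨lam, -, h⟩
    exact eq_diagonal_of_stabilizes h N.2
  · rintro ⟨a, ha, hN⟩
    exact ⟨a ^ 3, pow_ne_zero 3 ha, hN ▸ cuspidalCubicForm_diagonal ha⟩
end

section
/- The quantity Θ3 = (9(y'')²y⁽⁵⁾ − 45 y'' y''' y⁽⁴⁾ + 40(y''')³)/(y'')³ vanishes identically for every conic y(x) satisfying a(x² ) + bxy + cy² + dx + ey + f = 0 with y''≠0; in particular for y(x) = (a x² + b x + c)^{1/2} type solutions and any smooth function whose graph lies on a nondegenerate conic. -/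
/-- The relative invariant
`Θ₃ = (9(y'')²y⁽⁵⁾ − 45 y'' y''' y⁽⁴⁾ + 40(y''')³)/(y'')³` vanishes identically for any
smooth function whose graph lies on a (nonzero) conic and with `y'' ≠ 0`. -/
theorem theta3_vanishes_on_conics (y : ℝ → ℝ) (s : Set ℝ) (hs : IsOpen s)
    (hy : ContDiffOn ℝ (⊤ : ℕ∞) y s) (a b c d e f : ℝ)
    (hq : ¬(a = 0 ∧ b = 0 ∧ c = 0 ∧ d = 0 ∧ e = 0 ∧ f = 0))
    (hconic : ∀ x ∈ s,
      a * x ^ 2 + b * x * y x + c * (y x) ^ 2 + d * x + e * y x + f = 0)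
    (hy2 : ∀ x ∈ s, iteratedDeriv 2 y x ≠ 0) :
    ∀ x ∈ s,
      (9 * (iteratedDeriv 2 y x) ^ 2 * iteratedDeriv 5 y x
        - 45 * iteratedDeriv 2 y x * iteratedDeriv 3 y x * iteratedDeriv 4 y x
        + 40 * (iteratedDeriv 3 y x) ^ 3) / (iteratedDeriv 2 y x) ^ 3 = 0 := by
  -- smoothness of all iterated derivatives on `s`
  have hC : ∀ n : ℕ, ContDiffOn ℝ (⊤ : ℕ∞) (iteratedDeriv n y) s := by
    intro n
    induction n with
    | zero => simpa [iteratedDeriv_zero] using hy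
    | succ n ih =>
      rw [iteratedDeriv_succ]
      exact ih.deriv_of_isOpen hs (by simp)
  have hHD : ∀ (n : ℕ), ∀ t ∈ s, HasDerivAt (iteratedDeriv n y) (iteratedDeriv (n + 1) y t) t := by
    intro n t ht
    have hd : DifferentiableAt ℝ (iteratedDeriv n y) t :=
      ((hC n).differentiableOn (by simp)).differentiableAt (hs.mem_nhds ht)
    have := hd.hasDerivAt
    rwa [show deriv (iteratedDeriv n y) t = iteratedDeriv (n + 1) y t by
      rw [iteratedDeriv_succ]] at this
  -- derivative-of-zero step lemma
  have step : ∀ (F G : ℝ → ℝ), (∀ t ∈ s, F t = 0) →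
      (∀ t ∈ s, HasDerivAt F (G t) t) → ∀ t ∈ s, G t = 0 := by
    intro F G hF hFG t ht
    have hev : F =ᶠ[nhds t] fun _ => (0 : ℝ) :=
      Filter.eventuallyEq_of_mem (hs.mem_nhds ht) hF
    have h1 : HasDerivAt (fun _ : ℝ => (0 : ℝ)) (G t) t :=
      (hFG t ht).congr_of_eventuallyEq hev.symm
    have h2 : HasDerivAt (fun _ : ℝ => (0 : ℝ)) 0 t := hasDerivAt_const t 0
    exact h1.unique h2
  have h0 : ∀ t ∈ s, HasDerivAt y (iteratedDeriv 1 y t) t := by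
    intro t ht
    simpa [iteratedDeriv_zero] using hHD 0 t ht
  set y1 := iteratedDeriv 1 y with hy1
  set y2 := iteratedDeriv 2 y with hy2'
  set y3 := iteratedDeriv 3 y with hy3
  set y4 := iteratedDeriv 4 y with hy4
  set y5 := iteratedDeriv 5 y with hy5
  have h1 : ∀ t ∈ s, HasDerivAt y1 (y2 t) t := fun t ht => hHD 1 t ht
  have h2 : ∀ t ∈ s, HasDerivAt y2 (y3 t) t := fun t ht => hHD 2 t ht
  have h3 : ∀ t ∈ s, HasDerivAt y3 (y4 t) t := fun t ht => hHD 3 t ht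
  have h4 : ∀ t ∈ s, HasDerivAt y4 (y5 t) t := fun t ht => hHD 4 t ht
  -- auxiliary: HasDerivAt of the "K" factor
  have hK : ∀ t ∈ s, HasDerivAt (fun u => b * u + 2 * c * y u + e)
      (b + 2 * c * y1 t) t := by
    intro t ht
    have := (((hasDerivAt_id' t).const_mul b).add ((h0 t ht).const_mul (2 * c))).add_const e
    convert this using 1
    all_goals first | rfl | (simp only [Pi.add_apply]; ring) | ring | (funext u; simp)
  -- E1
  have hE1 : ∀ t ∈ s,
      2 * a * t + b * y t + d + (b * t + 2 * c * y t + e) * y1 t = 0 := by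
    apply step (fun u => a * u ^ 2 + b * u * y u + c * (y u) ^ 2 + d * u + e * y u + f)
    · exact hconic
    · intro t ht
      have H : HasDerivAt
          (fun u => a * u ^ 2 + b * u * y u + c * (y u) ^ 2 + d * u + e * y u + f)
          (a * (↑2 * t ^ 1) + ((b * 1) * y t + (b * t) * y1 t) +
            c * (↑2 * y t ^ 1 * y1 t) + d * 1 + e * y1 t) t := by
        exact (((((hasDerivAt_pow 2 t).const_mul a).add
          (((hasDerivAt_id' t).const_mul b).mul (h0 t ht))).add
          (((h0 t ht).pow 2).const_mul c)).add ((hasDerivAt_id' t).const_mul d)).add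
          ((h0 t ht).const_mul e) |>.add_const f
      convert H using 1
      all_goals first | rfl | (simp only [Pi.add_apply]; ring) | ring | (funext u; simp)
  -- E2
  have hE2 : ∀ t ∈ s,
      2 * a + 2 * b * y1 t + 2 * c * (y1 t) ^ 2 + (b * t + 2 * c * y t + e) * y2 t = 0 := by
    apply step (fun u => 2 * a * u + b * y u + d + (b * u + 2 * c * y u + e) * y1 u) _ hE1
    intro t ht
    have H := ((((hasDerivAt_id' t).const_mul (2 * a)).add ((h0 t ht).const_mul b)).add_const
      d).add ((hK t ht).mul (h1 t ht))
    convert H using 1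
    all_goals first | rfl | (simp only [Pi.add_apply]; ring) | ring | (funext u; simp)
  -- E3
  have hE3 : ∀ t ∈ s,
      (3 * b + 6 * c * y1 t) * y2 t + (b * t + 2 * c * y t + e) * y3 t = 0 := by
    apply step (fun u => 2 * a + 2 * b * y1 u + 2 * c * (y1 u) ^ 2
      + (b * u + 2 * c * y u + e) * y2 u) _ hE2
    intro t ht
    have H := (((hasDerivAt_const t (2 * a)).add ((h1 t ht).const_mul (2 * b))).add
      (((h1 t ht).pow 2).const_mul (2 * c))).add ((hK t ht).mul (h2 t ht))
    convert H using 1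
    push_cast
    all_goals first | rfl | (simp only [Pi.add_apply]; ring) | ring | (funext u; simp)
  -- E4
  have hE4 : ∀ t ∈ s,
      6 * c * (y2 t) ^ 2 + (4 * b + 8 * c * y1 t) * y3 t
        + (b * t + 2 * c * y t + e) * y4 t = 0 := by
    apply step (fun u => (3 * b + 6 * c * y1 u) * y2 u
      + (b * u + 2 * c * y u + e) * y3 u) _ hE3
    intro t ht
    have H := ((((hasDerivAt_const t (3 * b)).add ((h1 t ht).const_mul (6 * c))).mul
      (h2 t ht))).add ((hK t ht).mul (h3 t ht))
    convert H using 1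
    all_goals first | rfl | (simp only [Pi.add_apply]; ring) | ring | (funext u; simp)
  -- E5
  have hE5 : ∀ t ∈ s,
      20 * c * y2 t * y3 t + (5 * b + 10 * c * y1 t) * y4 t
        + (b * t + 2 * c * y t + e) * y5 t = 0 := by
    apply step (fun u => 6 * c * (y2 u) ^ 2 + (4 * b + 8 * c * y1 u) * y3 u
      + (b * u + 2 * c * y u + e) * y4 u) _ hE4
    intro t ht
    have H := ((((h2 t ht).pow 2).const_mul (6 * c)).add
      ((((hasDerivAt_const t (4 * b)).add ((h1 t ht).const_mul (8 * c))).mul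
        (h3 t ht)))).add ((hK t ht).mul (h4 t ht))
    convert H using 1
    push_cast
    all_goals first | rfl | (simp only [Pi.add_apply]; ring) | ring | (funext u; simp)
  -- conclusion
  intro x hx
  set K := b * x + 2 * c * y x + e with hKdef
  set K' := b + 2 * c * y1 x with hK'def
  have e1 := hE1 x hx
  have e2 := hE2 x hx
  have e3 := hE3 x hx
  have e4 := hE4 x hx
  have e5 := hE5 x hx
  have hy2x := hy2 x hx
  by_cases hK0 : K = 0
  · -- degenerate case: all coefficients vanish, contradiction
    exfalso
    apply hq
    have hcK' : K' * y2 x = 0 := by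
      have : (3 * b + 6 * c * y1 x) * y2 x = 0 := by
        rw [← hKdef] at e3; rw [hK0] at e3; linarith [e3]
      have h3K : 3 * (K' * y2 x) = 0 := by rw [hK'def]; linarith [this]
      linarith
    have hK'0 : K' = 0 := by
      rcases mul_eq_zero.1 hcK' with h | h
      · exact h
      · exact absurd h hy2x
    have hc0 : c = 0 := by
      have hk4 : 4 * b + 8 * c * y1 x = 0 := by
        rw [hK'def] at hK'0; linarith
      have : 6 * c * (y2 x) ^ 2 = 0 := by
        rw [← hKdef] at e4; rw [hK0] at e4
        linear_combination e4 - y3 x * hk4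
      have h2 : c * (y2 x) ^ 2 = 0 := by linarith
      rcases mul_eq_zero.1 h2 with h | h
      · exact h
      · exact absurd (pow_eq_zero_iff (by norm_num) |>.1 h) hy2x
    have hb0 : b = 0 := by
      have := hK'0; rw [hK'def, hc0] at this; linarith
    have he0 : e = 0 := by
      have := hK0; rw [hKdef, hb0, hc0] at this; linarith
    have ha0 : a = 0 := by
      rw [← hKdef] at e2; rw [hK0, hb0, hc0] at e2; linarith
    have hd0 : d = 0 := by
      rw [← hKdef] at e1; rw [hK0, ha0, hb0] at e1; linarith
    have hf0 : f = 0 := by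
      have := hconic x hx
      rw [ha0, hb0, hc0, hd0, he0] at this; linarith
    exact ⟨ha0, hb0, hc0, hd0, he0, hf0⟩
  · -- main case: numerator vanishes
    have hnum : 9 * (y2 x) ^ 2 * y5 x - 45 * y2 x * y3 x * y4 x + 40 * (y3 x) ^ 3 = 0 := by
      rw [← hKdef] at e3 e4 e5
      have hE3' : 3 * K' * y2 x + K * y3 x = 0 := by rw [hK'def]; linarith [e3]
      have hE4' : 6 * c * (y2 x) ^ 2 + 4 * K' * y3 x + K * y4 x = 0 := by
        rw [hK'def]; linarith [e4]
      have hE5' : 20 * c * y2 x * y3 x + 5 * K' * y4 x + K * y5 x = 0 := by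
        rw [hK'def]; linarith [e5]
      have key : K ^ 3 * (9 * (y2 x) ^ 2 * y5 x - 45 * y2 x * y3 x * y4 x
          + 40 * (y3 x) ^ 3) = 0 := by
        linear_combination (40 * K ^ 2 * (y3 x) ^ 2 + 60 * K * K' * y2 x * y3 x
            + 90 * c * K * (y2 x) ^ 3) * hE3'
          + (-45 * K ^ 2 * y2 x * y3 x - 45 * K * K' * (y2 x) ^ 2) * hE4'
          + 9 * K ^ 2 * (y2 x) ^ 2 * hE5'
      have hK3 : K ^ 3 ≠ 0 := pow_ne_zero _ hK0
      exact (mul_eq_zero.1 key).resolve_left hK3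
    rw [div_eq_zero_iff]
    left
    exact hnum
end

section
/- Given the structure equations dθ¹,…,dθ⁷ of the SU(2,1)/U(1) co-calibrated G2 structure (as listed), the three-form φ = θ^{123}+θ^{145}+θ^{167}+θ^{246}−θ^{257}−θ^{347}−θ^{356} satisfies d(*φ) = 0, where *φ = θ^{4567}+θ^{2367}+θ^{2345}+θ^{1357}−θ^{1346}−θ^{1256}−θ^{1247} is the Hodge dual with respect to g = Σ(θ^i)² and orientation θ^{1234567}. -/
/-!
Expanding `d(*φ)` by the Leibniz rule and the structure equations of `θ¹,…,θ⁷` writes it as a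
real combination of products of five one-forms. Sorting the factors of each product (one sign
per transposition) and discarding products with a repeated factor leaves a combination of the
basis five-forms `θ^{i₁⋯i₅}`, `i₁ < ⋯ < i₅`, whose coefficients all cancel.
-/

theorem eq_zero_of_eq_neg {K M : Type*} [DivisionRing K] [CharZero K] [AddCommGroup M]
    [Module K M] {x : M} (h : x = -x) : x = 0 := by
  have hx : (2 : K) • x = 0 := by
    rw [two_smul]
    nth_rewrite 1 [h]
    exact neg_add_cancel x
  exact (smul_eq_zero.mp hx).resolve_left two_ne_zero

section Anticommuting

variable {ι A : Type*} [Ring A] {θ : ι → A}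

theorem mul_self_eq_zero_of_anticomm (hanti : ∀ i j, θ i * θ j = -(θ j * θ i))
    (K : Type*) [DivisionRing K] [CharZero K] [Module K A] (i : ι) : θ i * θ i = 0 :=
  eq_zero_of_eq_neg (K := K) (hanti i i)

theorem mul_mul_self_eq_zero_of_anticomm (hanti : ∀ i j, θ i * θ j = -(θ j * θ i))
    (K : Type*) [DivisionRing K] [CharZero K] [Module K A] (i : ι) (x : A) :
    θ i * (θ i * x) = 0 := by
  rw [← mul_assoc, mul_self_eq_zero_of_anticomm hanti K, zero_mul]

theorem mul_left_comm_of_anticomm (hanti : ∀ i j, θ i * θ j = -(θ j * θ i))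
    (i j : ι) (x : A) :
    θ i * (θ j * x) = -(θ j * (θ i * x)) := by
  rw [← mul_assoc, hanti i j, neg_mul, mul_assoc]

end Anticommuting

theorem dual_g2_form_closed_general
    (A : Type*) [Ring A] [Algebra ℝ A]
    (θ : Fin 8 → A) (d : A →ₗ[ℝ] A)
    (hanti : ∀ i j : Fin 8, θ i * θ j = -(θ j * θ i))
    (hleib : ∀ (i : Fin 8) (ω : A), d (θ i * ω) = d (θ i) * ω - θ i * d ω)
    (h0 : d (θ 0) = Real.sqrt 10 • (θ 1 * θ 2) + (Real.sqrt 10 / 7) • (θ 3 * θ 4)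
      - (9 : ℝ) • (θ 4 * θ 7) + Real.sqrt 10 • (θ 5 * θ 6))
    (h1 : d (θ 1) = (-(Real.sqrt 10 / 4)) • (θ 0 * θ 2)
      + (4 * Real.sqrt 10 / 7) • (θ 3 * θ 5)
      - (Real.sqrt 10 / 4) • (θ 4 * θ 6) + (6 : ℝ) • (θ 5 * θ 7))
    (h2 : d (θ 2) = (-(Real.sqrt 10 / 5)) • (θ 0 * θ 1)
      + (5 * Real.sqrt 10 / 7) • (θ 3 * θ 6)
      + (Real.sqrt 10 / 5) • (θ 4 * θ 5) - (3 : ℝ) • (θ 6 * θ 7))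
    (h3 : d (θ 3) = (Real.sqrt 10 / 20) • (θ 0 * θ 4)
      + (4 * Real.sqrt 10 / 5) • (θ 1 * θ 5) - (5 * Real.sqrt 10 / 4) • (θ 2 * θ 6))
    (h4 : d (θ 4) = (Real.sqrt 10 / 7) • (θ 0 * θ 3) + (9 : ℝ) • (θ 0 * θ 7)
      + Real.sqrt 10 • (θ 1 * θ 6) + Real.sqrt 10 • (θ 2 * θ 5))
    (h5 : d (θ 5) = (-(Real.sqrt 10 / 4)) • (θ 0 * θ 6)
      + (4 * Real.sqrt 10 / 7) • (θ 1 * θ 3)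
      - (6 : ℝ) • (θ 1 * θ 7) - (Real.sqrt 10 / 4) • (θ 2 * θ 4))
    (h6 : d (θ 6) = (-(Real.sqrt 10 / 5)) • (θ 0 * θ 5)
      + (Real.sqrt 10 / 5) • (θ 1 * θ 4)
      + (5 * Real.sqrt 10 / 7) • (θ 2 * θ 3) + (3 : ℝ) • (θ 2 * θ 7)) :
    d (θ 3 * θ 4 * θ 5 * θ 6 + θ 1 * θ 2 * θ 5 * θ 6 + θ 1 * θ 2 * θ 3 * θ 4
      + θ 0 * θ 2 * θ 4 * θ 6 - θ 0 * θ 2 * θ 3 * θ 5 - θ 0 * θ 1 * θ 4 * θ 5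
      - θ 0 * θ 1 * θ 3 * θ 6) = 0 := by
  have sort_pair : ∀ i j : Fin 8, j < i → θ i * θ j = -(θ j * θ i) := fun i j _ ↦ hanti i j
  have sort_head : ∀ i j : Fin 8, j < i → ∀ x, θ i * (θ j * x) = -(θ j * (θ i * x)) :=
    fun i j _ ↦ mul_left_comm_of_anticomm hanti i j
  simp only [mul_assoc, map_add, map_sub, hleib, h0, h1, h2, h3, h4, h5, h6]
  simp only [add_mul, sub_mul, mul_add, mul_sub, smul_mul_assoc, mul_smul_comm, mul_assoc]
  simp only [sort_pair, sort_head, mul_self_eq_zero_of_anticomm hanti ℝ,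
    mul_mul_self_eq_zero_of_anticomm hanti ℝ, Fin.reduceLT, mul_neg, neg_neg, mul_zero,
    smul_zero, neg_zero]
  module

/-- In any (ℝ-algebra model of the) exterior algebra generated by one-forms
`θ 0, …, θ 7` (representing `θ¹,…,θ⁸`), with an ℝ-linear exterior derivative `d`
satisfying the Leibniz rule against one-forms and the structure equations of the
`SU(2,1)/U(1)` co-calibrated `G₂` structure, the four-form
`*φ = θ⁴⁵⁶⁷ + θ²³⁶⁷ + θ²³⁴⁵ + θ¹³⁵⁷ − θ¹³⁴⁶ − θ¹²⁵⁶ − θ¹²⁴⁷` is closed: `d(*φ) = 0`. -/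
theorem dual_g2_form_closed
    (A : Type*) [Ring A] [Algebra ℝ A]
    (θ : Fin 8 → A) (d : A →ₗ[ℝ] A)
    (hanti : ∀ i j : Fin 8, θ i * θ j = -(θ j * θ i))
    (hleib : ∀ (i : Fin 8) (ω : A), d (θ i * ω) = d (θ i) * ω - θ i * d ω)
    (h0 : d (θ 0) = Real.sqrt 10 • (θ 1 * θ 2) + (Real.sqrt 10 / 7) • (θ 3 * θ 4)
      - (9 : ℝ) • (θ 4 * θ 7) + Real.sqrt 10 • (θ 5 * θ 6))
    (h1 : d (θ 1) = (-(Real.sqrt 10 / 4)) • (θ 0 * θ 2)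
      + (4 * Real.sqrt 10 / 7) • (θ 3 * θ 5)
      - (Real.sqrt 10 / 4) • (θ 4 * θ 6) + (6 : ℝ) • (θ 5 * θ 7))
    (h2 : d (θ 2) = (-(Real.sqrt 10 / 5)) • (θ 0 * θ 1)
      + (5 * Real.sqrt 10 / 7) • (θ 3 * θ 6)
      + (Real.sqrt 10 / 5) • (θ 4 * θ 5) - (3 : ℝ) • (θ 6 * θ 7))
    (h3 : d (θ 3) = (Real.sqrt 10 / 20) • (θ 0 * θ 4)
      + (4 * Real.sqrt 10 / 5) • (θ 1 * θ 5) - (5 * Real.sqrt 10 / 4) • (θ 2 * θ 6))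
    (h4 : d (θ 4) = (Real.sqrt 10 / 7) • (θ 0 * θ 3) + (9 : ℝ) • (θ 0 * θ 7)
      + Real.sqrt 10 • (θ 1 * θ 6) + Real.sqrt 10 • (θ 2 * θ 5))
    (h5 : d (θ 5) = (-(Real.sqrt 10 / 4)) • (θ 0 * θ 6)
      + (4 * Real.sqrt 10 / 7) • (θ 1 * θ 3)
      - (6 : ℝ) • (θ 1 * θ 7) - (Real.sqrt 10 / 4) • (θ 2 * θ 4))
    (h6 : d (θ 6) = (-(Real.sqrt 10 / 5)) • (θ 0 * θ 5)
      + (Real.sqrt 10 / 5) • (θ 1 * θ 4)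
      + (5 * Real.sqrt 10 / 7) • (θ 2 * θ 3) + (3 : ℝ) • (θ 2 * θ 7))
    (h7 : d (θ 7) = (3 / 14 : ℝ) • (θ 0 * θ 4) - (4 / 7 : ℝ) • (θ 1 * θ 5)
      - (5 / 14 : ℝ) • (θ 2 * θ 6)) :
    d (θ 3 * θ 4 * θ 5 * θ 6 + θ 1 * θ 2 * θ 5 * θ 6 + θ 1 * θ 2 * θ 3 * θ 4
      + θ 0 * θ 2 * θ 4 * θ 6 - θ 0 * θ 2 * θ 3 * θ 5 - θ 0 * θ 1 * θ 4 * θ 5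
      - θ 0 * θ 1 * θ 3 * θ 6) = 0 :=
  dual_g2_form_closed_general A θ d hanti hleib h0 h1 h2 h3 h4 h5 h6
end

section
/- The map sending γ to κ(γ) = 3⁹(1 + γ² − γ)³/((γ−2)²(2γ−1)²(γ+1)²) satisfies: κ(γ) = 3⁹·7³/(2⁴·5²) if and only if γ ∈ {3/2, −1/2, 3, 1/3, −2, 2/3}; i.e., the only rational cuspidal curves y^p = x^q (exponent γ = q/p) with the cubic's projective curvature are those projectively equivalent to the cuspidal cubic. -/
/-!
Like the `j`-invariant, `κ` is invariant under `γ ↦ 1/γ` and `γ ↦ 1 - γ`, and `κ(3/2)` is the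
cubic's value. So after clearing denominators, `κ(γ) = κ(3/2)` becomes a sextic equation whose six
roots are exactly the orbit of `3/2`, and the sextic factors into the corresponding linear factors.
-/

/-- The projective curvature of the curve `y = x^γ` as a function of the exponent. -/
def kappaQ (γ : ℚ) : ℚ :=
  3 ^ 9 * (γ ^ 2 - γ + 1) ^ 3 / ((γ - 2) ^ 2 * (2 * γ - 1) ^ 2 * (γ + 1) ^ 2)

theorem kappaQ_sub_cubic_value {γ : ℚ}
    (hden : (γ - 2) ^ 2 * (2 * γ - 1) ^ 2 * (γ + 1) ^ 2 ≠ 0) :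
    kappaQ γ - 3 ^ 9 * 7 ^ 3 / (2 ^ 4 * 5 ^ 2) =
      -(3 ^ 14 / 10 ^ 2) *
          ((γ - 3 / 2) * (γ + 1 / 2) * (γ - 3) * (γ - 1 / 3) * (γ + 2) * (γ - 2 / 3)) /
        ((γ - 2) ^ 2 * (2 * γ - 1) ^ 2 * (γ + 1) ^ 2) := by
  rw [kappaQ, div_sub_div _ _ hden (by norm_num),
    div_eq_div_iff (mul_ne_zero hden (by norm_num)) hden]
  ring

theorem cubic_orbit_sextic_eq_zero_iff {K : Type*} [Field K] (x : K) :
    (x - 3 / 2) * (x + 1 / 2) * (x - 3) * (x - 1 / 3) * (x + 2) * (x - 2 / 3) = 0 ↔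
      x ∈ ({3 / 2, -1 / 2, 3, 1 / 3, -2, 2 / 3} : Set K) := by
  simp only [mul_eq_zero, sub_eq_zero, add_eq_zero_iff_eq_neg, neg_div, Set.mem_insert_iff,
    Set.mem_singleton_iff, or_assoc]

/-- `κ(γ) = 3⁹·7³/(2⁴·5²)` iff `γ ∈ {3/2, −1/2, 3, 1/3, −2, 2/3}`, i.e. the only
curves `y^p = x^q` with the cuspidal cubic's projective curvature are those
projectively equivalent to the cuspidal cubic. -/
theorem kappa_eq_cubic_value_iff (γ : ℚ) (h1 : γ ≠ -1) (h2 : γ ≠ 1 / 2) (h3 : γ ≠ 2) :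
    kappaQ γ = 3 ^ 9 * 7 ^ 3 / (2 ^ 4 * 5 ^ 2) ↔
      γ ∈ ({3 / 2, -1 / 2, 3, 1 / 3, -2, 2 / 3} : Set ℚ) := by
  have hden : (γ - 2) ^ 2 * (2 * γ - 1) ^ 2 * (γ + 1) ^ 2 ≠ 0 := by
    refine mul_ne_zero (mul_ne_zero ?_ ?_) ?_ <;> refine pow_ne_zero 2 fun h => ?_
    exacts [h3 (by linarith), h2 (by linarith), h1 (by linarith)]
  rw [← sub_eq_zero, kappaQ_sub_cubic_value hden, div_eq_zero_iff, or_iff_left hden,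
    mul_eq_zero, or_iff_right (by norm_num), cubic_orbit_sextic_eq_zero_iff]
end
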